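/- For every θ ∈ [0, π/2], with τ₀ = cos(θ/2)e₀ + sin(θ/2)e₁, τ₁ = sin(θ/2)e₀ + cos(θ/2)e₁, Σ'₁ = (1/√2)(e₀ ⊗ τ₀ + e₁ ⊗ τ₁), Σ'₂ = (1/√2)(e₀ ⊗ τ₁ + e₁ ⊗ τ₀), and κ' = (1/2)|Σ'₁⟩⟨Σ'₁| + (1/2)|Σ'₂⟩⟨Σ'₂|, the determinant of the partial transpose of κ' over the second subsystem vanishes: det(κ'^{T₂}) = 0. -/

import Mathlib

open Matrix Kronecker Polynomial ComplexOrder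

noncomputable section

/-- Partial trace over the first subsystem of a two-qubit (4×4) matrix. -/
def ptr1 (M : Matrix (Fin 2 × Fin 2) (Fin 2 × Fin 2) ℂ) : Matrix (Fin 2) (Fin 2) ℂ :=
  Matrix.of fun j l => ∑ i, M (i, j) (i, l)

/-- Partial trace over the second subsystem of a two-qubit (4×4) matrix. -/
def ptr2 (M : Matrix (Fin 2 × Fin 2) (Fin 2 × Fin 2) ℂ) : Matrix (Fin 2) (Fin 2) ℂ :=
  Matrix.of fun i k => ∑ j, M (i, j) (k, j)

/-- Rank-one projection |v⟩⟨v| of a qubit vector. -/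
def proj2 (v : Fin 2 → ℂ) : Matrix (Fin 2) (Fin 2) ℂ :=
  Matrix.of fun i j => v i * star (v j)

/-- Rank-one projection |v⟩⟨v| of a two-qubit vector. -/
def proj4 (v : Fin 2 × Fin 2 → ℂ) : Matrix (Fin 2 × Fin 2) (Fin 2 × Fin 2) ℂ :=
  Matrix.of fun p q => v p * star (v q)

/-- Kronecker (tensor) product of two qubit vectors. -/
def tens (a b : Fin 2 → ℂ) : Fin 2 × Fin 2 → ℂ := fun p => a p.1 * b p.2

/-- Unit (normalized) vector. -/
def UnitVec {α : Type*} [Fintype α] (v : α → ℂ) : Prop := ∑ i, v i * star (v i) = 1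

/-- Hermitian inner product of two-qubit vectors. -/
def inner4 (v w : Fin 2 × Fin 2 → ℂ) : ℂ := ∑ p, star (v p) * w p

/-- A 2×2 density matrix: positive semidefinite with unit trace. -/
def IsDensity2 (A : Matrix (Fin 2) (Fin 2) ℂ) : Prop := A.PosSemidef ∧ A.trace = 1

/-- Separability of a two-qubit density matrix: a finite convex combination of
Kronecker products of 2×2 density matrices. -/
def Separable4 (ρ : Matrix (Fin 2 × Fin 2) (Fin 2 × Fin 2) ℂ) : Prop :=
  ∃ (n : ℕ) (w : Fin n → ℝ) (A B : Fin n → Matrix (Fin 2) (Fin 2) ℂ),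
    (∀ i, 0 ≤ w i) ∧ (∑ i, w i = 1) ∧
    (∀ i, IsDensity2 (A i)) ∧ (∀ i, IsDensity2 (B i)) ∧
    ρ = ∑ i, (w i : ℂ) • (A i ⊗ₖ B i)

/-- Standard basis vector e₀ of ℂ². -/
def e₀ : Fin 2 → ℂ := ![1, 0]

/-- Standard basis vector e₁ of ℂ². -/
def e₁ : Fin 2 → ℂ := ![0, 1]

/-- τ₀-type vector: cos(t/2)e₀ + sin(t/2)e₁. -/
def tau0 (t : ℝ) : Fin 2 → ℂ := ![(Real.cos (t/2) : ℂ), (Real.sin (t/2) : ℂ)]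

/-- τ₁-type vector: sin(t/2)e₀ + cos(t/2)e₁. -/
def tau1 (t : ℝ) : Fin 2 → ℂ := ![(Real.sin (t/2) : ℂ), (Real.cos (t/2) : ℂ)]

/-- Σ'₁ = (1/√2)(e₀ ⊗ τ₀ + e₁ ⊗ τ₁). -/
def sig1' (t : ℝ) : Fin 2 × Fin 2 → ℂ :=
  fun q => ((Real.sqrt 2)⁻¹ : ℂ) * (tens e₀ (tau0 t) q + tens e₁ (tau1 t) q)

/-- Σ'₂ = (1/√2)(e₀ ⊗ τ₁ + e₁ ⊗ τ₀). -/
def sig2' (t : ℝ) : Fin 2 × Fin 2 → ℂ :=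
  fun q => ((Real.sqrt 2)⁻¹ : ℂ) * (tens e₀ (tau1 t) q + tens e₁ (tau0 t) q)

/-- The common reduced state: diagonal entries 1/2, off-diagonal entries (sin θ)/2. -/
def redMat (t : ℝ) : Matrix (Fin 2) (Fin 2) ℂ :=
  !![(1/2 : ℂ), ((Real.sin t / 2 : ℝ) : ℂ); ((Real.sin t / 2 : ℝ) : ℂ), (1/2 : ℂ)]

/-- κ'(p) = p|Σ'₁⟩⟨Σ'₁| + (1−p)|Σ'₂⟩⟨Σ'₂|. -/
def kappa' (t p : ℝ) : Matrix (Fin 2 × Fin 2) (Fin 2 × Fin 2) ℂ :=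
  (p : ℂ) • proj4 (sig1' t) + (1 - (p : ℂ)) • proj4 (sig2' t)

/-- Partial transpose over the second subsystem: (M^{T₂})_{(i,j),(k,l)} = M_{(i,l),(k,j)}. -/
def ptransp2 (M : Matrix (Fin 2 × Fin 2) (Fin 2 × Fin 2) ℂ) :
    Matrix (Fin 2 × Fin 2) (Fin 2 × Fin 2) ℂ :=
  Matrix.of fun q r => M (q.1, r.2) (r.1, q.2)

/-!
Let `X` flip a qubit. The vector `Σ'₁` is fixed by `X ⊗ X`, and `Σ'₂ = (1 ⊗ X) Σ'₁`, so conjugating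
by `M ↦ (X ⊗ 1) M (1 ⊗ X)` exchanges `|Σ'₁⟩⟨Σ'₁|` and `|Σ'₂⟩⟨Σ'₂|` and fixes their equal mixture `κ'`.
In indices `X` is `Fin.rev`, and the conjugation is
`M.submatrix (Prod.map Fin.rev id) (Prod.map id Fin.rev)`. After the partial transpose this symmetry says that rows `(0,1)` and `(1,0)` of `κ'^{T₂}` coincide.
-/

lemma det_ptransp2_eq_zero_of_submatrix_rev_eq {M : Matrix (Fin 2 × Fin 2) (Fin 2 × Fin 2) ℂ}
    (hM : M.submatrix (Prod.map Fin.rev id) (Prod.map id Fin.rev) = M) :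
    (ptransp2 M).det = 0 := by
  refine det_zero_of_row_eq (i := (0, 1)) (j := (1, 0)) (by decide) ?_
  funext q
  exact (congrFun (congrFun hM (0, q.2)) (q.1, 1)).symm

lemma proj4_submatrix_rev {v : Fin 2 × Fin 2 → ℂ}
    (hv : ∀ i j, v (Fin.rev i, Fin.rev j) = v (i, j)) :
    (proj4 v).submatrix (Prod.map Fin.rev id) (Prod.map id Fin.rev) =
      proj4 (fun p => v (p.1, Fin.rev p.2)) := by
  ext p q
  simp only [proj4, submatrix_apply, of_apply, Prod.map, id]
  rw [← hv p.1, Fin.rev_rev]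

lemma proj4_add_proj4_submatrix_rev {v : Fin 2 × Fin 2 → ℂ}
    (hv : ∀ i j, v (Fin.rev i, Fin.rev j) = v (i, j)) :
    (proj4 v + proj4 (fun p => v (p.1, Fin.rev p.2))).submatrix
        (Prod.map Fin.rev id) (Prod.map id Fin.rev) =
      proj4 v + proj4 (fun p => v (p.1, Fin.rev p.2)) := by
  rw [submatrix_add, Pi.add_apply, Pi.add_apply, proj4_submatrix_rev hv,
    proj4_submatrix_rev (fun i j => hv i (Fin.rev j)), add_comm]
  simp only [Fin.rev_rev]

lemma sig1'_rev_rev (t : ℝ) (i j : Fin 2) : sig1' t (Fin.rev i, Fin.rev j) = sig1' t (i, j) := by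
  fin_cases i <;> fin_cases j <;> simp [sig1', tens, e₀, e₁, tau0, tau1]

lemma sig2'_eq_sig1'_rev (t : ℝ) : sig2' t = fun p => sig1' t (p.1, Fin.rev p.2) := by
  funext ⟨i, j⟩
  fin_cases i <;> fin_cases j <;> simp [sig1', sig2', tens, e₀, e₁, tau0, tau1]

lemma kappa'_half (t : ℝ) :
    kappa' t (1 / 2) = (1 / 2 : ℂ) • (proj4 (sig1' t) + proj4 (sig2' t)) := by
  rw [kappa', smul_add]
  norm_num

theorem det_partial_transpose_of_equal_mixture_vanishes_general
    (θ : ℝ) :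
    (ptransp2 (kappa' θ (1/2))).det = 0 := by
  apply det_ptransp2_eq_zero_of_submatrix_rev_eq
  rw [kappa'_half, submatrix_smul, Pi.smul_apply, Pi.smul_apply, sig2'_eq_sig1'_rev,
    proj4_add_proj4_submatrix_rev (sig1'_rev_rev θ)]

/-- the determinant of the partial transpose (over the second subsystem)
of the equal masked mixture κ'(1/2) vanishes for every θ ∈ [0, π/2]. -/
theorem det_partial_transpose_of_equal_mixture_vanishes
    (θ : ℝ) (hθ : θ ∈ Set.Icc (0 : ℝ) (Real.pi / 2)) :
    (ptransp2 (kappa' θ (1/2))).det = 0 :=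
  det_partial_transpose_of_equal_mixture_vanishes_general θ

end
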